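/- arXiv:2506.08419 — 3 statements merged into one kernel-verified Lean document; each statement's English description precedes it below -/
import Mathlib

section
/- Let {a_t}_{t=0}^{T−1} be a nonnegative real sequence and δ > 0. Then ∑_{t=0}^{T−1} a_t/(δ + ∑_{s=0}^{t} a_s) ≤ log(1 + (∑_{t=0}^{T−1} a_t)/δ). -/
/-! Each term is bounded by an increment of the logarithm of the partial sums `S t = δ + ∑_{s<t} a s`:
since `log u ≥ 1 - u⁻¹`, we have `(S (t+1) - S t) / S (t+1) ≤ log (S (t+1)) - log (S t)`,
and these increments telescope to `log (S T / δ)`. -/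

open Real Finset

lemma sub_div_le_log_sub_log {x y : ℝ} (hx : 0 < x) (hy : 0 < y) :
    (y - x) / y ≤ log y - log x := by
  have h := one_sub_inv_le_log_of_pos (div_pos hy hx)
  rwa [log_div hy.ne' hx.ne', inv_div, one_sub_div hy.ne'] at h

lemma sum_range_sub_div_succ_le_log_sub_log {S : ℕ → ℝ} (hS : ∀ t, 0 < S t) (n : ℕ) :
    ∑ t ∈ range n, (S (t + 1) - S t) / S (t + 1) ≤ log (S n) - log (S 0) :=
  calc ∑ t ∈ range n, (S (t + 1) - S t) / S (t + 1)
      ≤ ∑ t ∈ range n, (log (S (t + 1)) - log (S t)) :=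
        sum_le_sum fun t _ => sub_div_le_log_sub_log (hS t) (hS (t + 1))
    _ = log (S n) - log (S 0) := sum_range_sub (fun t => log (S t)) n

/-- For a nonnegative sequence `a` and `δ > 0`,
`∑_{t=0}^{T−1} a_t / (δ + ∑_{s=0}^{t} a_s) ≤ log(1 + (∑_{t=0}^{T−1} a_t)/δ)`. -/
theorem sum_div_partial_sum_le_log
    (T : ℕ) (a : ℕ → ℝ) (ha : ∀ t, 0 ≤ a t) (δ : ℝ) (hδ : 0 < δ) :
    ∑ t ∈ Finset.range T, a t / (δ + ∑ s ∈ Finset.range (t + 1), a s) ≤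
      Real.log (1 + (∑ t ∈ Finset.range T, a t) / δ) := by
  have hS : ∀ t, 0 < δ + ∑ s ∈ range t, a s := fun t =>
    add_pos_of_pos_of_nonneg hδ (sum_nonneg fun s _ => ha s)
  calc ∑ t ∈ range T, a t / (δ + ∑ s ∈ range (t + 1), a s)
      = ∑ t ∈ range T, ((δ + ∑ s ∈ range (t + 1), a s) - (δ + ∑ s ∈ range t, a s)) /
          (δ + ∑ s ∈ range (t + 1), a s) := by
        simp only [sum_range_succ, add_sub_add_left_eq_sub, add_sub_cancel_left]
    _ ≤ log (δ + ∑ t ∈ range T, a t) - log (δ + ∑ s ∈ range 0, a s) :=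
        sum_range_sub_div_succ_le_log_sub_log hS T
    _ = log (1 + (∑ t ∈ range T, a t) / δ) := by
        rw [sum_range_zero, add_zero, ← log_div (hS T).ne' hδ.ne', add_div, div_self hδ.ne']
end

section
/- Let α ∈ (0,1] and let (m_t), (g_t), (G_t) be sequences in ℝ^d satisfying m_0 = g_0 and m_t = (1−α)m_{t−1} + α g_t for all t ≥ 1, and set e_t = g_t − G_t. Then for every t ≥ 0, ‖m_t − G_t‖ ≤ (1−α)^t ‖e_0‖ + ‖∑_{s=1}^{t} α(1−α)^{t−s} e_s‖ + ∑_{s=1}^{t} (1−α)^{t−s+1} ‖G_{s−1} − G_s‖. -/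
open Finset

theorem LinearRecurrence.eq_pow_smul_add_sum {R M : Type*} [CommSemiring R] [AddCommMonoid M]
    [Module R M] (c : R) (x u : ℕ → M) (hx : ∀ t, x (t + 1) = c • x t + u (t + 1)) (t : ℕ) :
    x t = c ^ t • x 0 + ∑ s ∈ Icc 1 t, c ^ (t - s) • u s := by
  induction t with
  | zero => simp
  | succ t ih =>
    have hshift : ∑ s ∈ Icc 1 t, c ^ (t + 1 - s) • u s = c • ∑ s ∈ Icc 1 t, c ^ (t - s) • u s := by
      rw [smul_sum]
      refine sum_congr rfl fun s hs => ?_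
      rw [Nat.sub_add_comm (mem_Icc.mp hs).2, pow_succ', mul_smul]
    rw [hx, ih, sum_Icc_succ_top (by omega), hshift, Nat.sub_self, pow_zero, one_smul, smul_add,
      pow_succ', mul_smul, add_assoc]

theorem ema_sub_eq_unroll {R M : Type*} [CommRing R] [AddCommGroup M] [Module R M] (α : R)
    (m g G : ℕ → M) (hm0 : m 0 = g 0) (hrec : ∀ t, m (t + 1) = (1 - α) • m t + α • g (t + 1))
    (t : ℕ) :
    m t - G t = (1 - α) ^ t • (g 0 - G 0) +
      ∑ s ∈ Icc 1 t, (α * (1 - α) ^ (t - s)) • (g s - G s) +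
      ∑ s ∈ Icc 1 t, (1 - α) ^ (t - s + 1) • (G (s - 1) - G s) := by
  -- The tracking error obeys the EMA recursion itself, driven by the new error and the target's drift.
  have herr : ∀ t, m (t + 1) - G (t + 1) = (1 - α) • (m t - G t) +
      (α • (g (t + 1) - G (t + 1)) + (1 - α) • (G (t + 1 - 1) - G (t + 1))) := by
    intro t
    rw [hrec, Nat.add_sub_cancel]
    module
  rw [LinearRecurrence.eq_pow_smul_add_sum _ (fun t => m t - G t)
    (fun s => α • (g s - G s) + (1 - α) • (G (s - 1) - G s)) herr t, hm0, add_assoc,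
    ← sum_add_distrib]
  congr 1
  refine sum_congr rfl fun s _ => ?_
  rw [smul_add, smul_smul, smul_smul, mul_comm, pow_succ]

/-- Norm bound from unrolling the EMA recursion `m_t = (1−α)m_{t−1} + α g_t`
(with `m_0 = g_0`) against a reference sequence `G_t`, with `e_t = g_t − G_t`:
`‖m_t − G_t‖ ≤ (1−α)^t ‖e_0‖ + ‖∑_{s=1}^{t} α(1−α)^{t−s} e_s‖ + ∑_{s=1}^{t} (1−α)^{t−s+1}‖G_{s−1} − G_s‖`. -/
theorem ema_unroll_norm_bound
    (d : ℕ) (α : ℝ) (hα : α ∈ Set.Ioc (0:ℝ) 1)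
    (m g G : ℕ → EuclideanSpace ℝ (Fin d))
    (hm0 : m 0 = g 0)
    (hrec : ∀ t : ℕ, m (t + 1) = (1 - α) • m t + α • g (t + 1)) :
    ∀ t : ℕ,
      ‖m t - G t‖ ≤
        (1 - α) ^ t * ‖g 0 - G 0‖ +
          ‖∑ s ∈ Finset.Icc 1 t, (α * (1 - α) ^ (t - s)) • (g s - G s)‖ +
          ∑ s ∈ Finset.Icc 1 t, (1 - α) ^ (t - s + 1) * ‖G (s - 1) - G s‖ := by
  intro t
  have hβ : 0 ≤ 1 - α := sub_nonneg.mpr hα.2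
  rw [ema_sub_eq_unroll α m g G hm0 hrec t]
  refine norm_add₃_le.trans ?_
  gcongr
  · rw [norm_smul, Real.norm_of_nonneg (by positivity)]
  · refine (norm_sum_le _ _).trans_eq (sum_congr rfl fun s _ => ?_)
    rw [norm_smul, Real.norm_of_nonneg (by positivity)]
end

section
/- Let S ≥ 0, M ≥ 0, A > 0, and η_max > 0, and set η* = min{ S/(12A), η_max }. If 0 ≤ −(η*/6)·S + A·(η*)² + M, then S ≤ 12√(A·M) + 12M/η_max. -/
/-- `hη` says `η` lies between `0` and `S / (12 A)`; there `A η² ≤ η S / 12`, so the quadratic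
term eats at most half of the descent `η S / 6`. -/
theorem mul_le_twelve_mul_of_descent {S M A η : ℝ} (hη : η * (12 * A * η - S) ≤ 0)
    (h : 0 ≤ -(η / 6) * S + A * η ^ 2 + M) : η * S ≤ 12 * M := by
  linear_combination 12 * h + hη

theorem le_mul_sqrt_of_sq_le {x y c : ℝ} (hc : 0 ≤ c) (h : x ^ 2 ≤ c ^ 2 * y) :
    x ≤ c * Real.sqrt y :=
  calc x ≤ |x| := le_abs_self x
    _ ≤ Real.sqrt (c ^ 2 * y) := Real.abs_le_sqrt h
    _ = c * Real.sqrt y := by rw [Real.sqrt_mul (sq_nonneg c), Real.sqrt_sq hc]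

theorem case_analysis_grad_bound_general
    (S M A ηmax : ℝ) (hM : 0 ≤ M) (hA : 0 < A) (hηmax : 0 < ηmax)
    (h : 0 ≤ -(min (S / (12 * A)) ηmax / 6) * S + A * (min (S / (12 * A)) ηmax) ^ 2 + M) :
    S ≤ 12 * Real.sqrt (A * M) + 12 * M / ηmax := by
  rcases le_total (S / (12 * A)) ηmax with hle | hle
  · rw [min_eq_left hle] at h
    have hηS : S / (12 * A) * S ≤ 12 * M :=
      mul_le_twelve_mul_of_descent
        (by rw [mul_div_cancel₀ S (by positivity), sub_self, mul_zero]) h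
    have hsq : S ^ 2 ≤ 12 ^ 2 * (A * M) := by
      rw [div_mul_eq_mul_div, div_le_iff₀ (by positivity)] at hηS
      linarith
    have : 0 ≤ 12 * M / ηmax := by positivity
    linarith [le_mul_sqrt_of_sq_le (by norm_num) hsq]
  · rw [min_eq_right hle] at h
    have hle' : 12 * A * ηmax ≤ S := by linarith [(le_div_iff₀ (by positivity)).mp hle]
    have hηS : ηmax * S ≤ 12 * M :=
      mul_le_twelve_mul_of_descent (mul_nonpos_of_nonneg_of_nonpos hηmax.le (by linarith)) h
    have : S ≤ 12 * M / ηmax := by rw [le_div_iff₀ hηmax]; linarith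
    linarith [Real.sqrt_nonneg (A * M)]

/-- For `S, M ≥ 0`, `A > 0`, `η_max > 0` and `η* = min {S/(12A), η_max}`,
if `0 ≤ −(η*/6)S + A(η*)² + M` then `S ≤ 12√(AM) + 12M/η_max`. -/
theorem case_analysis_grad_bound
    (S M A ηmax : ℝ) (hS : 0 ≤ S) (hM : 0 ≤ M) (hA : 0 < A) (hηmax : 0 < ηmax)
    (h : 0 ≤ -(min (S / (12 * A)) ηmax / 6) * S + A * (min (S / (12 * A)) ηmax) ^ 2 + M) :
    S ≤ 12 * Real.sqrt (A * M) + 12 * M / ηmax :=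
  case_analysis_grad_bound_general S M A ηmax hM hA hηmax h
end
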